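/- Let D be a τ-atomic integral domain with τ symmetric and associate preserving. Then G_τ(x) is connected for every x ∈ D^# if and only if the reduced graph G̅_τ(x) is connected for every x ∈ D^#, and this holds if and only if Diam(G_τ(x)) = 1 for every x ∈ D^# (with each G_τ(x) connected). -/

import Mathlib

/-- `a` is a nonzero nonunit, i.e. an element of `D^#`. -/
def NzNonunit {D : Type*} [CommRing D] (a : D) : Prop := a ≠ 0 ∧ ¬ IsUnit a

/-- `l` is the list of factors of a `τ`-factorization of `a`:
`a = λ * l.prod` for a unit `λ`, the factors are nonzero nonunits and pairwise `τ`-related. -/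
def TauFact {D : Type*} [CommRing D] (τ : D → D → Prop) (l : List D) (a : D) : Prop :=
  l ≠ [] ∧ (∀ b ∈ l, NzNonunit b) ∧ l.Pairwise τ ∧ ∃ u : Dˣ, a = (u : D) * l.prod

/-- `b` τ-divides `a`: `b` occurs as a factor in some τ-factorization of `a`. -/
def TauDvd {D : Type*} [CommRing D] (τ : D → D → Prop) (b a : D) : Prop :=
  ∃ l, TauFact τ l a ∧ b ∈ l

/-- `a` is τ-irreducible (a τ-atom): all its τ-factorizations are trivial. -/
def TauIrred {D : Type*} [CommRing D] (τ : D → D → Prop) (a : D) : Prop :=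
  NzNonunit a ∧ ∀ l, TauFact τ l a → l.length = 1

/-- `l` is a τ-atomic factorization of `a`. -/
def TauAtomicFact {D : Type*} [CommRing D] (τ : D → D → Prop) (l : List D) (a : D) : Prop :=
  TauFact τ l a ∧ ∀ b ∈ l, TauIrred τ b

/-- `D` is τ-atomic: every nonzero nonunit has a τ-atomic factorization. -/
def TauAtomic {D : Type*} [CommRing D] (τ : D → D → Prop) : Prop :=
  ∀ a : D, NzNonunit a → ∃ l, TauAtomicFact τ l a

def TauSymm {D : Type*} [CommRing D] (τ : D → D → Prop) : Prop :=
  ∀ a b, τ a b → τ b a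

/-- τ is associate preserving. -/
def TauAssocPres {D : Type*} [CommRing D] (τ : D → D → Prop) : Prop :=
  ∀ a b b' : D, τ a b → Associated b b' → τ a b'

/-- τ is refinable: replacing each factor of a τ-factorization by a
τ-factorization of it again yields a τ-factorization. -/
def TauRefinable {D : Type*} [CommRing D] (τ : D → D → Prop) : Prop :=
  ∀ (a : D) (l : List D) (F : List (List D)),
    TauFact τ l a → List.Forall₂ (fun b m => TauFact τ m b) l F →
    TauFact τ F.flatten a

/-- `a` is a vertex of the τ-irreducible divisor graph `G_τ(x)`. -/
def GVert {D : Type*} [CommRing D] (τ : D → D → Prop) (x a : D) : Prop :=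
  TauIrred τ a ∧ TauDvd τ a x

/-- `a` and `b` are adjacent (distinct, i.e. non-associated, vertices joined by an edge)
in `G_τ(x)`: some τ-factorization of `x` contains associates of both. -/
def GAdj {D : Type*} [CommRing D] (τ : D → D → Prop) (x a b : D) : Prop :=
  GVert τ x a ∧ GVert τ x b ∧ ¬ Associated a b ∧
  ∃ l, TauFact τ l x ∧ (∃ a' ∈ l, Associated a a') ∧ (∃ b' ∈ l, Associated b b')

/-- `G_τ(x)` is connected (vertices are taken up to associates). -/
def GConnected {D : Type*} [CommRing D] (τ : D → D → Prop) (x : D) : Prop :=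
  ∀ a b, GVert τ x a → GVert τ x b →
    Relation.ReflTransGen (fun u v => GAdj τ x u v ∨ Associated u v) a b

/-- The reduced graph `G̅_τ(x)` (loops deleted) is connected; loops do not affect
connectivity, so this is connectivity with respect to the same adjacency relation. -/
def GBarConnected {D : Type*} [CommRing D] (τ : D → D → Prop) (x : D) : Prop :=
  ∀ a b, GVert τ x a → GVert τ x b →
    Relation.ReflTransGen (fun u v => GAdj τ x u v ∨ Associated u v) a b

/-- `G_τ(x)` is a pseudoclique: any two non-associated vertices are adjacent.
(Equivalently, the reduced graph `G̅_τ(x)` is a clique / complete graph.) -/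
def GPseudoclique {D : Type*} [CommRing D] (τ : D → D → Prop) (x : D) : Prop :=
  ∀ a b, GVert τ x a → GVert τ x b → ¬ Associated a b → GAdj τ x a b

/-- `Diam(G_τ(x)) ≤ 1`: any two vertices are equal (associated) or adjacent. -/
def GDiamLeOne {D : Type*} [CommRing D] (τ : D → D → Prop) (x : D) : Prop :=
  ∀ a b, GVert τ x a → GVert τ x b → Associated a b ∨ GAdj τ x a b

/-- `G_τ(x)` has finitely many vertices (up to associates). -/
def GVertFinite {D : Type*} [CommRing D] (τ : D → D → Prop) (x : D) : Prop :=
  ∃ s : Finset D, ∀ a, GVert τ x a → ∃ c ∈ s, Associated a c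

/-- The vertex `a` of `G_τ(x)` has finite degree: finitely many adjacent vertices
up to associates (loops not counted). -/
def GDegFinite {D : Type*} [CommRing D] (τ : D → D → Prop) (x a : D) : Prop :=
  ∃ s : Finset D, ∀ b, GAdj τ x a b → ∃ c ∈ s, Associated b c

/-- The vertex `a` of `G_τ(x)` carries finitely many loops: there is a uniform bound on
the number of occurrences of associates of `a` in τ-atomic factorizations of `x`. -/
def GLoopsFinite {D : Type*} [CommRing D] (τ : D → D → Prop) (x a : D) : Prop :=
  ∃ N : ℕ, ∀ l m : List D, TauAtomicFact τ l x → m.Sublist l →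
    (∀ b ∈ m, Associated a b) → m.length ≤ N

/-- `D` satisfies τ-ACCP. -/
def TauACCP {D : Type*} [CommRing D] (τ : D → D → Prop) : Prop :=
  ∀ a : ℕ → D, (∀ i, TauDvd τ (a (i + 1)) (a i)) →
    ∃ N, ∀ i, N ≤ i → Associated (a i) (a N)

/-- `D` is a τ-UFD. -/
def TauUFD {D : Type*} [CommRing D] (τ : D → D → Prop) : Prop :=
  TauAtomic τ ∧ ∀ (x : D) (l₁ l₂ : List D), TauAtomicFact τ l₁ x → TauAtomicFact τ l₂ x →
    Multiset.Rel Associated (l₁ : Multiset D) (l₂ : Multiset D)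

/-- `D` is a τ-FFD: each nonzero nonunit has only finitely many τ-factorizations
up to rearrangement and associates. -/
def TauFFD {D : Type*} [CommRing D] (τ : D → D → Prop) : Prop :=
  ∀ x : D, NzNonunit x → ∃ S : Finset (Multiset D),
    ∀ l : List D, TauFact τ l x → ∃ m ∈ S, Multiset.Rel Associated (l : Multiset D) m

/-- `D` is a τ-WFFD: each nonzero nonunit has finitely many τ-divisors up to associates. -/
def TauWFFD {D : Type*} [CommRing D] (τ : D → D → Prop) : Prop :=
  ∀ x : D, NzNonunit x → ∃ s : Finset D,
    ∀ b, TauDvd τ b x → ∃ c ∈ s, Associated b c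

/-- `D` is a τ-idf domain: each nonzero nonunit has finitely many τ-irreducible
τ-divisors up to associates. -/
def TauIdf {D : Type*} [CommRing D] (τ : D → D → Prop) : Prop :=
  ∀ x : D, NzNonunit x → ∃ s : Finset D,
    ∀ b, TauIrred τ b → TauDvd τ b x → ∃ c ∈ s, Associated b c

/-!
If every `G_τ(x)` is connected, then every vertex `a` of `G_τ(x)` occurs, up to associates, in
every τ-atomic factorization `W` of `x`; hence any two vertices lie in one factorization, which
gives diameter at most one. The claim is proved by induction on the length of `W`. Follow a path
from `a` to a factor of `W` backwards: at an edge `p — q` with `q` associated to `w ∈ W`, write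
both the factorization witnessing the edge and `W` with `w` in front and cancel `w`. Then `p` is
a vertex of the graph of `z = ∏ (W.erase w)`, which has the shorter τ-atomic factorization
`W.erase w`, so `p` is associated to a factor of `W` by induction.
-/

section TauFactorization

variable {D : Type*} [CommRing D] {τ : D → D → Prop}

theorem NzNonunit.of_associated {a b : D} (ha : NzNonunit a) (hab : Associated a b) :
    NzNonunit b :=
  ⟨hab.ne_zero_iff.mp ha.1, fun hb => ha.2 (hab.isUnit_iff.mpr hb)⟩

namespace TauFact

theorem nzNonunit [IsDomain D] {l : List D} {x : D} (h : TauFact τ l x) : NzNonunit x := by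
  obtain ⟨hne, hmem, -, u, rfl⟩ := h
  obtain ⟨b, t, rfl⟩ := List.exists_cons_of_ne_nil hne
  refine ⟨mul_ne_zero u.ne_zero (List.prod_ne_zero fun h0 => (hmem 0 h0).1 rfl), fun hx => ?_⟩
  rw [List.prod_cons, ← mul_assoc] at hx
  exact (hmem b List.mem_cons_self).2 (isUnit_of_mul_isUnit_right (isUnit_of_mul_isUnit_left hx))

theorem associated_prod {l : List D} {x : D} (h : TauFact τ l x) : Associated l.prod x :=
  let ⟨_, _, _, u, hu⟩ := h
  ⟨u, by rw [hu, mul_comm]⟩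

theorem of_associated {l : List D} {x y : D} (h : TauFact τ l x) (hxy : Associated x y) :
    TauFact τ l y := by
  obtain ⟨hne, hmem, hpw, u, rfl⟩ := h
  obtain ⟨v, rfl⟩ := hxy
  exact ⟨hne, hmem, hpw, u * v, by rw [Units.val_mul]; ring⟩

theorem perm (hsym : TauSymm τ) {l l' : List D} {x : D} (h : TauFact τ l x) (hll' : l.Perm l') :
    TauFact τ l' x := by
  obtain ⟨hne, hmem, hpw, u, rfl⟩ := h
  exact ⟨by rintro rfl; exact hne hll'.eq_nil, fun b hb => hmem b (hll'.mem_iff.mpr hb),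
    hpw.perm hll' (hsym _ _), u, by rw [hll'.prod_eq]⟩

theorem cons_associated (hsym : TauSymm τ) (hap : TauAssocPres τ) {w w' x : D} {t : List D}
    (h : TauFact τ (w :: t) x) (hw : Associated w w') : TauFact τ (w' :: t) x := by
  obtain ⟨-, hmem, hpw, u, rfl⟩ := h
  obtain ⟨v, rfl⟩ := hw
  rw [List.forall_mem_cons] at hmem
  rw [List.pairwise_cons] at hpw
  refine ⟨List.cons_ne_nil _ _, List.forall_mem_cons.mpr ⟨hmem.1.of_associated ⟨v, rfl⟩, hmem.2⟩,
    List.pairwise_cons.mpr ⟨fun b hb => hsym _ _ (hap b w _ (hsym _ _ (hpw.1 b hb)) ⟨v, rfl⟩),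
      hpw.2⟩, u * v⁻¹, ?_⟩
  simp only [List.prod_cons, Units.val_mul]
  linear_combination (-((u : D) * w * t.prod)) * v.inv_mul

theorem cons_erase [DecidableEq D] (hsym : TauSymm τ) (hap : TauAssocPres τ) {l : List D}
    {b b' x : D} (h : TauFact τ l x) (hb : b ∈ l) (hbb' : Associated b b') :
    TauFact τ (b' :: l.erase b) x :=
  (h.perm hsym (List.perm_cons_erase hb)).cons_associated hsym hap hbb'

theorem of_cons {w x : D} {t : List D} (h : TauFact τ (w :: t) x) (ht : t ≠ []) :
    TauFact τ t t.prod :=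
  let ⟨_, hmem, hpw, _⟩ := h
  ⟨ht, fun b hb => hmem b (List.mem_cons_of_mem w hb), (List.pairwise_cons.mp hpw).2, 1,
    (one_mul _).symm⟩

theorem cancel_cons [IsDomain D] {w x : D} {t t' : List D} (h : TauFact τ (w :: t) x)
    (h' : TauFact τ (w :: t') x) (ht' : t' ≠ []) : TauFact τ t' t.prod := by
  have hprod : Associated (w * t'.prod) (w * t.prod) := by
    simpa only [List.prod_cons] using h'.associated_prod.trans h.associated_prod.symm
  have hw : w ≠ 0 := (h.2.1 w List.mem_cons_self).1
  obtain ⟨v, hv⟩ := Associated.of_mul_left hprod (Associated.refl w) hw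
  obtain ⟨-, hmem', hpw', -⟩ := h'
  exact ⟨ht', fun b hb => hmem' b (List.mem_cons_of_mem w hb), (List.pairwise_cons.mp hpw').2,
    v, by rw [← hv, mul_comm]⟩

end TauFact

theorem TauDvd.of_associated {a x y : D} (h : TauDvd τ a x) (hxy : Associated x y) :
    TauDvd τ a y :=
  let ⟨l, hl, ha⟩ := h
  ⟨l, hl.of_associated hxy, ha⟩

theorem TauIrred.associated_of_tauDvd {a x : D} (hx : TauIrred τ x) (ha : TauDvd τ a x) :
    Associated a x := by
  obtain ⟨l, hl, hal⟩ := ha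
  obtain ⟨b, rfl⟩ := List.length_eq_one_iff.mp (hx.2 l hl)
  obtain rfl := List.mem_singleton.mp hal
  obtain ⟨-, -, -, u, rfl⟩ := hl
  exact ⟨u, by rw [List.prod_singleton, mul_comm]⟩

section Connected

variable [IsDomain D]

theorem exists_mem_associated_of_gAdj [DecidableEq D] (hsym : TauSymm τ) (hap : TauAssocPres τ)
    {W : List D} {x p q w : D} (hW : TauAtomicFact τ W x) (hw : w ∈ W)
    (hqw : Associated q w) (hpq : GAdj τ x p q)
    (hrec : GVert τ (W.erase w).prod p → ∃ w' ∈ W.erase w, Associated p w') :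
    ∃ w' ∈ W, Associated p w' := by
  obtain ⟨hp, -, -, l, hl, ⟨p', hp'l, hpp'⟩, ⟨q', hq'l, hqq'⟩⟩ := hpq
  by_cases hp'q' : p' = q'
  · subst hp'q'
    exact ⟨w, hw, hpp'.trans (hqq'.symm.trans hqw)⟩
  have hp'l' : p' ∈ l.erase q' := (List.mem_erase_of_ne hp'q').mpr hp'l
  have hl' : TauFact τ (w :: l.erase q') x := hl.cons_erase hsym hap hq'l (hqq'.symm.trans hqw)
  have hWw : TauFact τ (w :: W.erase w) x := hW.1.cons_erase hsym hap hw (Associated.refl w)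
  have hz : TauFact τ (l.erase q') (W.erase w).prod :=
    hWw.cancel_cons hl' (List.ne_nil_of_mem hp'l')
  have hpz : GVert τ (W.erase w).prod p :=
    ⟨hp.1, _, hz.cons_erase hsym hap hp'l' hpp'.symm, List.mem_cons_self⟩
  obtain ⟨w', hw', hpw'⟩ := hrec hpz
  exact ⟨w', List.mem_of_mem_erase hw', hpw'⟩

theorem GVert.exists_mem_associated (hsym : TauSymm τ) (hap : TauAssocPres τ)
    (hconn : ∀ x : D, NzNonunit x → GConnected τ x) {W : List D} {x a : D}
    (ha : GVert τ x a) (hW : TauAtomicFact τ W x) : ∃ w ∈ W, Associated a w := by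
  classical
  induction hn : W.length using Nat.strong_induction_on generalizing W x a with
  | _ n ih =>
  subst hn
  obtain ⟨w₁, t, rfl⟩ := List.exists_cons_of_ne_nil hW.1.1
  by_cases ht : t = []
  · subst ht
    have hxw : Associated x w₁ := by simpa using hW.1.associated_prod.symm
    exact ⟨w₁, List.mem_singleton_self w₁,
      (hW.2 w₁ List.mem_cons_self).associated_of_tauDvd (ha.2.of_associated hxw)⟩
  have hw₁ : GVert τ x w₁ := ⟨hW.2 w₁ List.mem_cons_self, _, hW.1, List.mem_cons_self⟩
  refine Relation.ReflTransGen.head_induction_on (hconn x hW.1.nzNonunit a w₁ ha hw₁)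
    ⟨w₁, List.mem_cons_self, Associated.refl w₁⟩ ?_
  rintro p q (hpq | hpq) - ⟨w, hw, hqw⟩
  · have hlen : (w₁ :: t).length - 1 < (w₁ :: t).length := by simp
    have hW' : (w₁ :: t).erase w ≠ [] := by
      rw [← List.length_pos_iff, List.length_erase_of_mem hw, List.length_cons,
        Nat.add_sub_cancel, List.length_pos_iff]
      exact ht
    refine exists_mem_associated_of_gAdj hsym hap hW hw hqw hpq fun hp => ?_
    have hWw : TauFact τ (w :: (w₁ :: t).erase w) _ :=
      hW.1.cons_erase hsym hap hw (Associated.refl w)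
    exact ih _ hlen hp ⟨hWw.of_cons hW', fun b hb => hW.2 b (List.mem_of_mem_erase hb)⟩
      (List.length_erase_of_mem hw)
  · exact ⟨w, hw, hpq.trans hqw⟩

theorem gDiamLeOne_of_forall_gConnected (hsym : TauSymm τ) (hap : TauAssocPres τ)
    (hatomic : TauAtomic τ) (hconn : ∀ x : D, NzNonunit x → GConnected τ x) {x : D}
    (hx : NzNonunit x) : GDiamLeOne τ x := by
  intro a b ha hb
  by_cases hab : Associated a b
  · exact Or.inl hab
  obtain ⟨W, hW⟩ := hatomic x hx
  obtain ⟨wa, hwa, hawa⟩ := ha.exists_mem_associated hsym hap hconn hW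
  obtain ⟨wb, hwb, hbwb⟩ := hb.exists_mem_associated hsym hap hconn hW
  exact Or.inr ⟨ha, hb, hab, W, hW.1, ⟨wa, hwa, hawa⟩, ⟨wb, hwb, hbwb⟩⟩

end Connected

end TauFactorization

theorem stmt9 {D : Type*} [CommRing D] [IsDomain D] (τ : D → D → Prop)
    (hsym : TauSymm τ) (hap : TauAssocPres τ) (hatomic : TauAtomic τ) :
    ((∀ x : D, NzNonunit x → GConnected τ x) ↔
      (∀ x : D, NzNonunit x → GBarConnected τ x)) ∧
    ((∀ x : D, NzNonunit x → GConnected τ x) ↔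
      (∀ x : D, NzNonunit x → GConnected τ x ∧ GDiamLeOne τ x)) := by
  refine ⟨Iff.rfl, fun hconn x hx => ⟨hconn x hx, ?_⟩, fun h x hx => (h x hx).1⟩
  exact gDiamLeOne_of_forall_gConnected hsym hap hatomic hconn hx
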